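/- arXiv:1906.02107 — 3 statements merged into one kernel-verified Lean document; each statement's English description precedes it below -/
import Mathlib

section
/- Let $\tilde{w}_t$ be a sequence of real numbers updated by $\tilde{w}_{t+1} = \tilde{w}_t + \alpha \delta_t$, where each update step $\delta_t$ depends only on the sign of $\tilde{w}_t$ (i.e., $\delta_t = D_t(\mathrm{sign}(\tilde{w}_t))$ for functions $D_t$). For any $C > 0$, the sequence $\tilde{v}_t$ defined by $\tilde{v}_0 = C\tilde{w}_0$ and $\tilde{v}_{t+1} = \tilde{v}_t + C\alpha D_t(\mathrm{sign}(\tilde{v}_t))$ satisfies $\tilde{v}_t = C\tilde{w}_t$ for all $t$, and hence $\mathrm{sign}(\tilde{v}_t) = \mathrm{sign}(\tilde{w}_t)$ for all $t$. -/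
noncomputable def sgn (x : ℝ) : ℝ := if 0 ≤ x then 1 else -1

lemma sgn_mul_pos {C x : ℝ} (hC : 0 < C) : sgn (C * x) = sgn x := by
  unfold sgn
  rcases le_or_gt 0 x with h | h
  · rw [if_pos h, if_pos (mul_nonneg hC.le h)]
  · rw [if_neg (not_le.2 h), if_neg (not_le.2 (mul_neg_of_pos_of_neg hC h))]

theorem lr_invariance (α C : ℝ) (hα : 0 < α) (hC : 0 < C)
    (D : ℕ → ℝ → ℝ) (w v : ℕ → ℝ)
    (hw : ∀ t, w (t + 1) = w t + α * D t (sgn (w t)))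
    (hv0 : v 0 = C * w 0)
    (hv : ∀ t, v (t + 1) = v t + C * α * D t (sgn (v t))) :
    ∀ t, v t = C * w t ∧ sgn (v t) = sgn (w t) := by
  intro t
  induction t with
  | zero => exact ⟨hv0, by rw [hv0, sgn_mul_pos hC]⟩
  | succ n ih =>
    have h1 : v (n + 1) = C * w (n + 1) := by
      rw [hv, hw, ih.1, sgn_mul_pos hC]; ring
    exact ⟨h1, by rw [h1, sgn_mul_pos hC]⟩
end

section
/- Let $0 < \gamma \le 1$, $\tau \ge 0$, and suppose $g_t = g$ for all $t \ge 1$ with $|g| > \tau$, $m_0 = 0$, and $\mathrm{sign}(g) = \mathrm{sign}(w_0)$. Then there exists a time $T$ such that the Bop update flips the weight: $w_T = -w_0$. -/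
theorem bop_eventual_flip (γ τ g : ℝ) (hγ0 : 0 < γ) (hγ1 : γ ≤ 1) (hτ : 0 ≤ τ)
    (hg : τ < |g|)
    (m w : ℕ → ℝ)
    (hm0 : m 0 = 0)
    (hm : ∀ t, m (t + 1) = (1 - γ) * m t + γ * g)
    (hw0 : w 0 = 1 ∨ w 0 = -1)
    (hsign : sgn g = sgn (w 0))
    (hw : ∀ t, w (t + 1) =
      if τ ≤ |m (t + 1)| ∧ sgn (m (t + 1)) = sgn (w t) then -w t else w t) :
    ∃ T, w T = -w 0 := by
  by_contra hnone
  push_neg at hnone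
  have hgpos : 0 < |g| := lt_of_le_of_lt hτ hg
  set r : ℝ := 1 - γ with hr
  have hr0 : 0 ≤ r := by linarith
  have hr1 : r < 1 := by simp [hr]; linarith
  -- closed form
  have hclosed : ∀ t, m t = g * (1 - r ^ t) := by
    intro t
    induction t with
    | zero => simp [hm0]
    | succ n ih => rw [hm n, ih]; ring
  -- w is constant
  have hwconst : ∀ t, w t = w 0 := by
    intro t
    induction t with
    | zero => rfl
    | succ n ih =>
      rw [hw n]
      split
      · exfalso
        apply hnone (n + 1)
        rw [hw n, if_pos (by assumption), ih]
      · exact ih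
  -- find n with r^n small
  have hε : 0 < 1 - τ / |g| := by
    have : τ / |g| < 1 := (div_lt_one hgpos).mpr hg
    linarith
  obtain ⟨n, hn⟩ := exists_pow_lt_of_lt_one hε hr1
  have hrn1 : r ^ (n + 1) < 1 - τ / |g| := by
    calc r ^ (n + 1) = r ^ n * r := pow_succ r n
    _ ≤ r ^ n * 1 := by
        apply mul_le_mul_of_nonneg_left (by linarith) (pow_nonneg hr0 n)
    _ < 1 - τ / |g| := by simpa using hn
  have hεle : 1 - τ / |g| ≤ 1 := by
    have : 0 ≤ τ / |g| := div_nonneg hτ (le_of_lt hgpos)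
    linarith
  have hcpos : 0 < 1 - r ^ (n + 1) := by linarith
  have hmn : m (n + 1) = g * (1 - r ^ (n + 1)) := hclosed (n + 1)
  have habs : τ ≤ |m (n + 1)| := by
    rw [hmn, abs_mul, abs_of_pos hcpos]
    have h1 : τ / |g| < 1 - r ^ (n + 1) := by linarith
    have := (div_lt_iff₀ hgpos).mp h1
    linarith [this]
  have hsgn : sgn (m (n + 1)) = sgn (w 0) := by
    rw [← hsign, hmn]
    unfold sgn
    have : 0 ≤ g * (1 - r ^ (n + 1)) ↔ 0 ≤ g := by
      constructor
      · intro h; nlinarith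
      · intro h; positivity
    by_cases hgn : 0 ≤ g
    · rw [if_pos (this.mpr hgn), if_pos hgn]
    · rw [if_neg (fun h => hgn (this.mp h)), if_neg hgn]
  have := hw n
  rw [if_pos ⟨habs, by rw [hsgn, hwconst n]⟩, hwconst n, hwconst (n + 1)] at this
  have hw0ne : w 0 ≠ 0 := by rcases hw0 with h | h <;> rw [h] <;> norm_num
  apply hw0ne
  linarith
end

section
/- Let $0 < \gamma \le 1$, $m_0 = 0$, and suppose $g_t \ge c > \tau \ge 0$ for all $t \ge 1$ in the Bop update with $w_0 = 1$. Then the number of weight flips up to any time $T$ is at most $1$: the weight flips exactly once (to $-1$) and never flips again. -/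
theorem bop_single_flip (γ τ c : ℝ) (hγ0 : 0 < γ) (hγ1 : γ ≤ 1)
    (hτ : 0 ≤ τ) (hc : τ < c)
    (g m w : ℕ → ℝ)
    (hg : ∀ t, 1 ≤ t → c ≤ g t)
    (hm0 : m 0 = 0)
    (hm : ∀ t, m (t + 1) = (1 - γ) * m t + γ * g (t + 1))
    (hw0 : w 0 = 1)
    (hw : ∀ t, w (t + 1) =
      if τ ≤ |m (t + 1)| ∧ sgn (m (t + 1)) = sgn (w t) then -w t else w t) :
    (∀ T : ℕ, ((Finset.range T).filter (fun t => w (t + 1) ≠ w t)).card ≤ 1) ∧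
    ∃ T : ℕ, 0 < T ∧ (∀ t, t < T → w t = 1) ∧ ∀ t, T ≤ t → w t = -1 := by
  have hc0 : (0:ℝ) < c := lt_of_le_of_lt hτ hc
  have h1γ : (0:ℝ) ≤ 1 - γ := by linarith
  -- m is nonneg
  have hmnn : ∀ t, 0 ≤ m t := by
    intro t
    induction t with
    | zero => simp [hm0]
    | succ n ih =>
      have hgn : c ≤ g (n+1) := hg (n+1) (Nat.le_add_left 1 n)
      rw [hm n]
      nlinarith
  have hsgnm : ∀ t, sgn (m t) = 1 := fun t => if_pos (hmnn t)
  have hsgn1 : sgn (1:ℝ) = 1 := if_pos zero_le_one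
  have hsgnneg1 : sgn (-1:ℝ) = -1 := if_neg (by norm_num)
  -- dichotomy
  have hdich : ∀ t, w t = 1 ∨ w t = -1 := by
    intro t
    induction t with
    | zero => exact Or.inl hw0
    | succ n ih =>
      rw [hw n]
      split
      · rcases ih with h | h <;> simp [h]
      · exact ih
  -- absorbing
  have habs : ∀ t, w t = -1 → w (t+1) = -1 := by
    intro t h
    rw [hw t, if_neg]
    · exact h
    · rintro ⟨-, hs⟩
      rw [hsgnm, h, hsgnneg1] at hs
      norm_num at hs
  have habs' : ∀ t s, w t = -1 → t ≤ s → w s = -1 := by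
    intro t s h hts
    induction s with
    | zero => exact Nat.le_zero.mp hts ▸ h
    | succ n ih =>
      rcases Nat.lt_or_ge t (n+1) with h' | h'
      · exact habs n (ih (Nat.lt_succ_iff.mp h'))
      · exact le_antisymm hts h' ▸ h
  -- lower bound
  have hlb : ∀ t, c - c * (1-γ)^t ≤ m t := by
    intro t
    induction t with
    | zero => simp [hm0]
    | succ n ih =>
      have hgn : c ≤ g (n+1) := hg (n+1) (Nat.le_add_left 1 n)
      rw [hm n, pow_succ]
      have h1 : (1-γ) * (c - c*(1-γ)^n) ≤ (1-γ) * m n := mul_le_mul_of_nonneg_left ih h1γ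
      nlinarith
  -- exists t with w t = -1
  have hflip : ∃ t, w t = -1 := by
    obtain ⟨n, hn⟩ := exists_pow_lt_of_lt_one (div_pos (by linarith : (0:ℝ) < c - τ) hc0)
      (by linarith : 1 - γ < 1)
    have hmn : τ ≤ m n := by
      have := hlb n
      have h2 : c * (1-γ)^n < c - τ := by
        have := (lt_div_iff₀ hc0).mp hn
        nlinarith
      linarith
    have hmn1 : τ ≤ m (n+1) := by
      have hgn : c ≤ g (n+1) := hg (n+1) (Nat.le_add_left 1 n)
      rw [hm n]
      nlinarith [hmnn n]
    rcases hdich n with h | h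
    · refine ⟨n+1, ?_⟩
      rw [hw n, if_pos ⟨by rwa [abs_of_nonneg (hmnn (n+1))], by rw [hsgnm, h, hsgn1]⟩, h]
    · exact ⟨n, h⟩
  classical
  set T := Nat.find hflip with hT
  have hwT : w T = -1 := Nat.find_spec hflip
  have hT0 : 0 < T := by
    rcases Nat.eq_zero_or_pos T with h | h
    · rw [h, hw0] at hwT; norm_num at hwT
    · exact h
  have hbefore : ∀ t, t < T → w t = 1 := by
    intro t ht
    rcases hdich t with h | h
    · exact h
    · exact absurd h (Nat.find_min hflip ht)
  have hafter : ∀ t, T ≤ t → w t = -1 := fun t ht => habs' T t hwT ht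
  refine ⟨?_, T, hT0, hbefore, hafter⟩
  intro T'
  have hsub : ((Finset.range T').filter (fun t => w (t + 1) ≠ w t)) ⊆ {T-1} := by
    intro t ht
    simp only [Finset.mem_filter] at ht
    obtain ⟨-, hne⟩ := ht
    simp only [Finset.mem_singleton]
    by_contra hne'
    rcases Nat.lt_or_ge t T with h | h
    · have ht1 : t + 1 < T := by omega
      exact hne (by rw [hbefore (t+1) ht1, hbefore t h])
    · exact hne (by rw [hafter (t+1) (by omega), hafter t h])
  calc _ ≤ ({T-1} : Finset ℕ).card := Finset.card_le_card hsub
    _ = 1 := Finset.card_singleton _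
end
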